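/- For any graph G, the restriction maps Short(C₁(G;ℤ)) → Short(𝒞(G)) and Short(C₁(G;ℤ)) → Short(ℱ(G)) are surjective, and the inclusion of 𝒞(G) ⊕ ℱ(G) in C₁(G;ℤ) induces an isomorphism φ : (C(𝒞(G)), d_𝒞) → (C(ℱ(G)), −d_ℱ) of torsors with ℚ-valued maps, characterized by φ([r_𝒞(χ)]) = [r_ℱ(χ)] for χ ∈ Char(C₁(G;ℤ)), where r_𝒞 and r_ℱ are the restriction maps. -/

import Mathlib

set_option linter.unusedSectionVars false

open Matrix BigOperators

namespace Greene

/-- A rational number is an integer. -/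
def isInt (q : ℚ) : Prop := ∃ m : ℤ, q = (m : ℚ)

section LatticeDefs

variable {ι : Type} [Fintype ι] [DecidableEq ι]
variable {ι' : Type} [Fintype ι'] [DecidableEq ι']

/-- The bilinear form on `ι → ℚ` with (integral) Gram matrix `B`. -/
def qform (B : Matrix ι ι ℤ) (x y : ι → ℚ) : ℚ :=
  x ⬝ᵥ ((B.map (Int.cast : ℤ → ℚ)) *ᵥ y)

/-- The set of integer vectors: the standard lattice inside `ι → ℚ`. -/
def intVecs (ι : Type) [Fintype ι] [DecidableEq ι] : Set (ι → ℚ) :=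
  {x | ∀ i, isInt (x i)}

lemma qform_zero_left (B : Matrix ι ι ℤ) (y : ι → ℚ) : qform B 0 y = 0 :=
  zero_dotProduct _

lemma qform_add_left (B : Matrix ι ι ℤ) (x x' y : ι → ℚ) :
    qform B (x + x') y = qform B x y + qform B x' y := add_dotProduct _ _ _

lemma qform_neg_left (B : Matrix ι ι ℤ) (x y : ι → ℚ) :
    qform B (-x) y = -qform B x y := neg_dotProduct _ _

/-- The dual lattice `S* = {x ∈ span_ℚ S | ⟨x,y⟩ ∈ ℤ for all y ∈ S}`. -/
def dualOf (B : Matrix ι ι ℤ) (S : Set (ι → ℚ)) : AddSubgroup (ι → ℚ) where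
  carrier := {x | x ∈ Submodule.span ℚ S ∧ ∀ y ∈ S, isInt (qform B x y)}
  zero_mem' := ⟨Submodule.zero_mem _, fun y _ => ⟨0, by simp [qform_zero_left]⟩⟩
  add_mem' := by
    intro a b ha hb
    refine ⟨Submodule.add_mem _ ha.1 hb.1, fun y hy => ?_⟩
    obtain ⟨m, hm⟩ := ha.2 y hy
    obtain ⟨m', hm'⟩ := hb.2 y hy
    exact ⟨m + m', by rw [qform_add_left, hm, hm']; push_cast; ring⟩
  neg_mem' := by
    intro a ha
    refine ⟨Submodule.neg_mem _ ha.1, fun y hy => ?_⟩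
    obtain ⟨m, hm⟩ := ha.2 y hy
    exact ⟨-m, by rw [qform_neg_left, hm]; push_cast; ring⟩

/-- Characteristic covectors: `χ ∈ S*` with `⟨χ,y⟩ ≡ ⟨y,y⟩ (mod 2)` for all `y ∈ S`. -/
def CharOf (B : Matrix ι ι ℤ) (S : Set (ι → ℚ)) : Set (ι → ℚ) :=
  {χ | χ ∈ dualOf B S ∧ ∀ y ∈ S, ∃ m : ℤ, qform B χ y - qform B y y = 2 * (m : ℚ)}

/-- Two covectors are in the same class mod `2S`. -/
def SameClass (S : Set (ι → ℚ)) (χ χ' : ι → ℚ) : Prop :=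
  ∃ y ∈ S, χ' = χ + (2 : ℚ) • y

/-- Short characteristic covectors: minimal norm in their class mod `2S`. -/
def ShortOf (B : Matrix ι ι ℤ) (S : Set (ι → ℚ)) : Set (ι → ℚ) :=
  {χ | χ ∈ CharOf B S ∧ ∀ χ' ∈ CharOf B S, SameClass S χ χ' → qform B χ χ ≤ qform B χ' χ'}

/-- Rank of a lattice: dimension of its rational span. -/
noncomputable def rkOf (S : Set (ι → ℚ)) : ℕ := Module.finrank ℚ (Submodule.span ℚ S)

/-- The lattice `S` sitting inside its dual. -/
def latIn (B : Matrix ι ι ℤ) (S : Set (ι → ℚ)) : AddSubgroup (dualOf B S) :=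
  AddSubgroup.closure {x | (x : ι → ℚ) ∈ S}

/-- The discriminant group `S*/S`. -/
def disc (B : Matrix ι ι ℤ) (S : Set (ι → ℚ)) : Type :=
  dualOf B S ⧸ latIn B S

noncomputable instance (B : Matrix ι ι ℤ) (S : Set (ι → ℚ)) : AddCommGroup (disc B S) :=
  inferInstanceAs (AddCommGroup (dualOf B S ⧸ latIn B S))

/-- The class of a dual vector in the discriminant group. -/
def dmk (B : Matrix ι ι ℤ) (S : Set (ι → ℚ)) {x : ι → ℚ} (hx : x ∈ dualOf B S) :
    disc B S := QuotientAddGroup.mk (⟨x, hx⟩ : dualOf B S)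

/-- `S` is an additive subgroup (a sublattice, when contained in a lattice). -/
def IsLat (S : Set (ι → ℚ)) : Prop :=
  (0 : ι → ℚ) ∈ S ∧ ∀ x ∈ S, ∀ y ∈ S, x - y ∈ S

/-- The form is integer valued on `S`. -/
def IntegralOn (B : Matrix ι ι ℤ) (S : Set (ι → ℚ)) : Prop :=
  ∀ x ∈ S, ∀ y ∈ S, isInt (qform B x y)

/-- Unimodularity: the dual lattice equals the lattice. -/
def UnimodularOn (B : Matrix ι ι ℤ) (S : Set (ι → ℚ)) : Prop :=
  ((dualOf B S : AddSubgroup (ι → ℚ)) : Set (ι → ℚ)) = S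

/-- Positive definiteness of the form on the span of `S`. -/
def PosDefOn (B : Matrix ι ι ℤ) (S : Set (ι → ℚ)) : Prop :=
  ∀ x ∈ Submodule.span ℚ S, x ≠ 0 → 0 < qform B x x

/-- Orthogonality of two sublattices. -/
def OrthogonalSets (B : Matrix ι ι ℤ) (S T : Set (ι → ℚ)) : Prop :=
  ∀ x ∈ S, ∀ y ∈ T, qform B x y = 0

/-- `S, T` are complementary sublattices of `L`: orthogonal with ranks summing to `rk L`. -/
noncomputable def ComplementaryIn (B : Matrix ι ι ℤ) (L S T : Set (ι → ℚ)) : Prop :=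
  OrthogonalSets B S T ∧ rkOf S + rkOf T = rkOf L

/-- `S ⊆ L` is a primitive sublattice: the restriction map `L* → S*` surjects. -/
def PrimitiveIn (B : Matrix ι ι ℤ) (L S : Set (ι → ℚ)) : Prop :=
  ∀ x ∈ dualOf B S, ∃ z ∈ dualOf B L, ∀ u ∈ S, qform B z u = qform B x u

/-- `s` is the signature of the form restricted to the span of `S` (Sylvester form). -/
def IsSignatureOf (B : Matrix ι ι ℤ) (S : Set (ι → ℚ)) (s : ℤ) : Prop :=
  ∃ (p q : ℕ) (v : Fin (p + q) → (ι → ℚ)),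
    (∀ i, v i ∈ Submodule.span ℚ S) ∧
    Submodule.span ℚ (Set.range v) = Submodule.span ℚ S ∧
    LinearIndependent ℚ v ∧
    (∀ i j, i ≠ j → qform B (v i) (v j) = 0) ∧
    (∀ i : Fin (p + q),
      if (i : ℕ) < p then 0 < qform B (v i) (v i) else qform B (v i) (v i) < 0) ∧
    s = (p : ℤ) - (q : ℤ)

/-- `S` admits an orthonormal basis of `n` elements, i.e. `S ≅ ℤⁿ`. -/
def HasOrthonormalBasis (B : Matrix ι ι ℤ) (S : Set (ι → ℚ)) (n : ℕ) : Prop :=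
  ∃ v : Fin n → (ι → ℚ), (∀ i, v i ∈ S) ∧
    (∀ i j, qform B (v i) (v j) = if i = j then 1 else 0) ∧
    (∀ x ∈ S, ∃ c : Fin n → ℤ, x = ∑ i, (c i : ℚ) • v i)

/-- Isomorphism of lattices: an additive bijection preserving the forms. -/
def LatIso (B : Matrix ι ι ℤ) (S : Set (ι → ℚ)) (B' : Matrix ι' ι' ℤ) (S' : Set (ι' → ℚ)) :
    Prop :=
  ∃ f : (ι → ℚ) → (ι' → ℚ), Set.BijOn f S S' ∧
    (∀ x ∈ S, ∀ y ∈ S, f (x + y) = f x + f y) ∧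
    (∀ x ∈ S, ∀ y ∈ S, qform B' (f x) (f y) = qform B x y)

/-- An isomorphism of the torsors `C(S₁) → C(S₂)` (given on representatives by `Φ`),
covering the group isomorphism `ψ` of discriminant groups. -/
def TorsorMapIso (B₁ : Matrix ι ι ℤ) (S₁ : Set (ι → ℚ))
    (B₂ : Matrix ι' ι' ℤ) (S₂ : Set (ι' → ℚ))
    (Φ : (ι → ℚ) → (ι' → ℚ)) (ψ : disc B₁ S₁ ≃+ disc B₂ S₂) : Prop :=
  (∀ χ ∈ CharOf B₁ S₁, Φ χ ∈ CharOf B₂ S₂) ∧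
  (∀ χ ∈ CharOf B₁ S₁, ∀ χ' ∈ CharOf B₁ S₁,
    (SameClass S₁ χ χ' ↔ SameClass S₂ (Φ χ) (Φ χ'))) ∧
  (∀ μ ∈ CharOf B₂ S₂, ∃ χ ∈ CharOf B₁ S₁, SameClass S₂ (Φ χ) μ) ∧
  (∀ χ ∈ CharOf B₁ S₁, ∀ χ' ∈ CharOf B₁ S₁,
    ∀ (x : ι → ℚ) (y : ι' → ℚ) (hx : x ∈ dualOf B₁ S₁) (hy : y ∈ dualOf B₂ S₂),
      χ' = χ + (2 : ℚ) • x → Φ χ' = Φ χ + (2 : ℚ) • y →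
      ψ (dmk B₁ S₁ hx) = dmk B₂ S₂ hy)

/-- Compatibility of `Φ` with the `d`-invariants: `d₂([Φ χ]) = ε · d₁([χ])`,
where `d` is the minimum of `(|χ'|² - rk)/4` over the class. -/
noncomputable def DCompat (B₁ : Matrix ι ι ℤ) (S₁ : Set (ι → ℚ))
    (B₂ : Matrix ι' ι' ℤ) (S₂ : Set (ι' → ℚ))
    (ε : ℚ) (Φ : (ι → ℚ) → (ι' → ℚ)) : Prop :=
  ∀ χ ∈ CharOf B₁ S₁, ∀ q : ℚ,
    IsLeast {t | ∃ χ' ∈ CharOf B₁ S₁, SameClass S₁ χ χ' ∧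
      t = (qform B₁ χ' χ' - (rkOf S₁ : ℚ)) / 4} q →
    IsLeast {t | ∃ μ ∈ CharOf B₂ S₂, SameClass S₂ (Φ χ) μ ∧
      t = (qform B₂ μ μ - (rkOf S₂ : ℚ)) / 4} (ε * q)

/-- Compatibility of `Φ` with the `ρ`-invariants: `ρ₂([Φ χ]) ≡ ε · ρ₁([χ]) (mod 2)`. -/
def RhoCompat (B₁ : Matrix ι ι ℤ) (S₁ : Set (ι → ℚ))
    (B₂ : Matrix ι' ι' ℤ) (S₂ : Set (ι' → ℚ))
    (ε : ℚ) (Φ : (ι → ℚ) → (ι' → ℚ)) : Prop :=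
  ∀ χ ∈ CharOf B₁ S₁, ∀ s₁ s₂ : ℤ, IsSignatureOf B₁ S₁ s₁ → IsSignatureOf B₂ S₂ s₂ →
    ∃ m : ℤ, (qform B₂ (Φ χ) (Φ χ) - (s₂ : ℚ)) / 4 - ε * ((qform B₁ χ χ - (s₁ : ℚ)) / 4)
      = 2 * (m : ℚ)

/-- The `d`-invariants `(C(S₁), d₁)` and `(C(S₂), ε·d₂)` are isomorphic. -/
noncomputable def DIso (B₁ : Matrix ι ι ℤ) (S₁ : Set (ι → ℚ))
    (B₂ : Matrix ι' ι' ℤ) (S₂ : Set (ι' → ℚ)) (ε : ℚ) : Prop :=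
  ∃ (Φ : (ι → ℚ) → (ι' → ℚ)) (ψ : disc B₁ S₁ ≃+ disc B₂ S₂),
    TorsorMapIso B₁ S₁ B₂ S₂ Φ ψ ∧ DCompat B₁ S₁ B₂ S₂ ε Φ

end LatticeDefs

/-- An abstract integral lattice, presented by its Gram matrix. -/
structure IntLattice where
  n : ℕ
  B : Matrix (Fin n) (Fin n) ℤ
  symm : B.IsSymm
  nondeg : B.det ≠ 0

/-- The Gram matrix of the orthogonal direct sum `Λ₁ ⊥ Λ₂`. -/
def glueGram (L₁ L₂ : IntLattice) :
    Matrix (Fin L₁.n ⊕ Fin L₂.n) (Fin L₁.n ⊕ Fin L₂.n) ℤ :=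
  Matrix.fromBlocks L₁.B 0 0 L₂.B

/-- The glue lattice `Λ₁ ⊕_ψ Λ₂ = {x + y ∈ Λ₁* ⊕ Λ₂* : ψ(x̄) = ȳ}`. -/
def glueSet (L₁ L₂ : IntLattice)
    (ψ : disc L₁.B (intVecs (Fin L₁.n)) ≃+ disc L₂.B (intVecs (Fin L₂.n))) :
    Set (Fin L₁.n ⊕ Fin L₂.n → ℚ) :=
  {w | ∃ (h₁ : (w ∘ Sum.inl) ∈ dualOf L₁.B (intVecs (Fin L₁.n)))
        (h₂ : (w ∘ Sum.inr) ∈ dualOf L₂.B (intVecs (Fin L₂.n))),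
        ψ (dmk _ _ h₁) = dmk _ _ h₂}

/-- `Λ₁` embedded in the first factor of `Λ₁* ⊕ Λ₂*`. -/
def inlLat (L₁ L₂ : IntLattice) : Set (Fin L₁.n ⊕ Fin L₂.n → ℚ) :=
  {w | (w ∘ Sum.inl) ∈ intVecs (Fin L₁.n) ∧ w ∘ Sum.inr = 0}

/-- `Λ₂` embedded in the second factor of `Λ₁* ⊕ Λ₂*`. -/
def inrLat (L₁ L₂ : IntLattice) : Set (Fin L₁.n ⊕ Fin L₂.n → ℚ) :=
  {w | (w ∘ Sum.inr) ∈ intVecs (Fin L₂.n) ∧ w ∘ Sum.inl = 0}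

/-- Stabilization `S ⊕ ℤᵏ`. -/
def stabSet {ι : Type} [Fintype ι] [DecidableEq ι] (S : Set (ι → ℚ)) (k : ℕ) :
    Set (ι ⊕ Fin k → ℚ) :=
  {w | (w ∘ Sum.inl) ∈ S ∧ ∀ j, isInt (w (Sum.inr j))}

/-- A finite loopless multigraph, with a reference orientation of each edge. -/
structure MultiGraph where
  nV : ℕ
  nE : ℕ
  hd : Fin nE → Fin nV
  tl : Fin nE → Fin nV
  loopless : ∀ e, hd e ≠ tl e

namespace MultiGraph

/-- The boundary map `C₁(G;ℚ) → C₀(G;ℚ)`, `∂ e = head(e) − tail(e)`. -/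
def bndry (G : MultiGraph) (x : Fin G.nE → ℚ) : Fin G.nV → ℚ :=
  fun v => ∑ e, x e * ((if G.hd e = v then 1 else 0) - (if G.tl e = v then 1 else 0))

/-- The flow lattice `ℱ(G) = ker ∂ ∩ C₁(G;ℤ)`. -/
def flowSet (G : MultiGraph) : Set (Fin G.nE → ℚ) :=
  {x | (∀ e, isInt (x e)) ∧ G.bndry x = 0}

/-- The cut lattice `𝒞(G) = im ∂* ∩ C₁(G;ℤ)`. -/
def cutSet (G : MultiGraph) : Set (Fin G.nE → ℚ) :=
  {x | (∀ e, isInt (x e)) ∧ ∃ g : Fin G.nV → ℚ, ∀ e, x e = g (G.hd e) - g (G.tl e)}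

/-- Reachability using only edges from the set `A`. -/
def ReachIn (G : MultiGraph) (A : Set (Fin G.nE)) : Fin G.nV → Fin G.nV → Prop :=
  Relation.ReflTransGen
    (fun u v => ∃ e ∈ A, (G.hd e = u ∧ G.tl e = v) ∨ (G.hd e = v ∧ G.tl e = u))

def Connected (G : MultiGraph) : Prop := ∀ u v, G.ReachIn Set.univ u v

/-- 2-edge-connectedness: connected, and removing any one edge leaves it connected. -/
def TwoEdgeConnected (G : MultiGraph) : Prop :=
  G.Connected ∧ ∀ e : Fin G.nE, ∀ u v, G.ReachIn {e}ᶜ u v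

/-- `C` is the edge set of a cycle of `G`. -/
def IsCycleEdgeSet (G : MultiGraph) (C : Set (Fin G.nE)) : Prop :=
  ∃ k : ℕ, 0 < k ∧ ∃ (e : Fin k → Fin G.nE) (v : Fin k → Fin G.nV),
    Function.Injective e ∧ Function.Injective v ∧ C = Set.range e ∧
    ∀ i, (G.hd (e i) = v (finRotate k i) ∧ G.tl (e i) = v i) ∨
         (G.tl (e i) = v (finRotate k i) ∧ G.hd (e i) = v i)

/-- A maximal spanning forest: acyclic and realizing all of `G`'s reachability. -/
def IsMaxForest (G : MultiGraph) (F : Finset (Fin G.nE)) : Prop :=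
  (∀ C, G.IsCycleEdgeSet C → ¬(C ⊆ (↑F : Set (Fin G.nE)))) ∧
  ∀ u v, G.ReachIn Set.univ u v → G.ReachIn (↑F) u v

open Classical in
/-- The fundamental cut vector of `e ∈ F`:
`+1` on edges leaving the component `K₁` of the tail of `e` in `F − e`,
`−1` on edges entering it, `0` otherwise. -/
noncomputable def cutVec (G : MultiGraph) (F : Finset (Fin G.nE)) (e : Fin G.nE) :
    Fin G.nE → ℚ := fun j =>
  (if G.ReachIn (↑(F.erase e)) (G.tl j) (G.tl e) then 1 else 0)
    - (if G.ReachIn (↑(F.erase e)) (G.hd j) (G.tl e) then 1 else 0)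

/-- `x` is the fundamental cycle vector of `e ∉ F`: the unique flow supported on
`F ∪ {e}` whose coefficient on `e` is `+1`. -/
def IsFundCycleVec (G : MultiGraph) (F : Finset (Fin G.nE)) (e : Fin G.nE)
    (x : Fin G.nE → ℚ) : Prop :=
  G.bndry x = 0 ∧ (∀ j, j ∉ F → j ≠ e → x j = 0) ∧ x e = 1

/-- Reorienting the edges of `G`: `o e = true` keeps the reference direction. -/
def reorient (G : MultiGraph) (o : Fin G.nE → Bool) : MultiGraph :=
  { G with
    hd := fun e => if o e then G.hd e else G.tl e
    tl := fun e => if o e then G.tl e else G.hd e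
    loopless := by
      intro e
      by_cases h : o e = true
      · simpa [h] using G.loopless e
      · simpa [h] using (G.loopless e).symm }

end MultiGraph

/-- A 2-isomorphism: a bijection of edge sets preserving edge sets of cycles. -/
def TwoIsomorphic (G G' : MultiGraph) : Prop :=
  ∃ σ : Fin G.nE ≃ Fin G'.nE, ∀ C, G.IsCycleEdgeSet C ↔ G'.IsCycleEdgeSet (σ '' C)

/-!
The cut space `Kc = im ∂*` and the flow space `Kf = ker ∂` are orthogonal complements in `ℚ^E`,
and the fundamental cuts and cycles of a spanning forest show that `𝒞(G) = Kc ∩ ℤ^E` and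
`ℱ(G) = Kf ∩ ℤ^E` are both primitive in `ℤ^E`. Hence every characteristic covector `ξ` of one of
them is the restriction of an odd vector `χ ∈ ℤ^E`, and `ξ ↦ χ - ξ` is a well-defined bijection
between the classes of characteristic covectors of `𝒞(G)` and of `ℱ(G)`, covering the gluing
isomorphism of their discriminant groups.

For the `d`-invariants, let `ξ` be short and take an odd lift `χ` of `ξ` of minimal norm. If some
`|χ e| > 1`, Minty's lemma, for `G` with every edge oriented along the sign of `χ`, gives a
directed cycle or a directed cut `v` through `e`, and `v ⬝ᵥ v < χ ⬝ᵥ v`: subtracting `2v` shortens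
`χ` (for a cycle) or `ξ` (for a cut), which is absurd. So `χ ∈ {±1}^E` and
`|ξ|² + |χ - ξ|² = |E|`; as every odd vector has norm at least `|E|`, `χ - ξ` is short, and
`d_ℱ = -d_𝒞`.
-/

lemma isInt_add {a b : ℚ} (ha : isInt a) (hb : isInt b) : isInt (a + b) := by
  obtain ⟨m, rfl⟩ := ha; obtain ⟨k, rfl⟩ := hb; exact ⟨m + k, by push_cast; ring⟩

lemma isInt_neg {a : ℚ} (ha : isInt a) : isInt (-a) := by
  obtain ⟨m, rfl⟩ := ha; exact ⟨-m, by push_cast; ring⟩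

lemma isInt_sub {a b : ℚ} (ha : isInt a) (hb : isInt b) : isInt (a - b) := by
  simpa only [sub_eq_add_neg] using isInt_add ha (isInt_neg hb)

lemma isInt_mul {a b : ℚ} (ha : isInt a) (hb : isInt b) : isInt (a * b) := by
  obtain ⟨m, rfl⟩ := ha; obtain ⟨k, rfl⟩ := hb; exact ⟨m * k, by push_cast; ring⟩

lemma isInt_ite_one_zero (p : Prop) [Decidable p] : isInt (if p then 1 else 0) := by
  split_ifs
  exacts [⟨1, by norm_num⟩, ⟨0, by norm_num⟩]

section Vectors

variable {ι : Type}

def oddVecs (ι : Type) : Set (ι → ℚ) := {χ | ∀ i, ∃ m : ℤ, χ i = 2 * m + 1}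

def signVecs (ι : Type) : Set (ι → ℚ) := {ε | ∀ i, ε i = 1 ∨ ε i = -1}

def signOf (o : ι → Bool) : ι → ℚ := fun j => if o j then 1 else -1

lemma signVecs_subset_oddVecs : signVecs ι ⊆ oddVecs ι := fun ε hε i => by
  rcases hε i with h | h
  exacts [⟨0, by rw [h]; norm_num⟩, ⟨-1, by rw [h]; norm_num⟩]

lemma one_le_abs_of_oddVecs {χ : ι → ℚ} (hχ : χ ∈ oddVecs ι) (i : ι) : 1 ≤ |χ i| := by
  obtain ⟨m, hm⟩ := hχ i
  have : (1 : ℤ) ≤ |2 * m + 1| := by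
    rcases le_or_gt 0 (2 * m + 1) with h | h
    · rw [abs_of_nonneg h]; omega
    · rw [abs_of_neg h]; omega
  rw [hm]
  exact_mod_cast this

variable [Fintype ι]

lemma card_le_dotProduct_self_of_oddVecs {χ : ι → ℚ} (hχ : χ ∈ oddVecs ι) :
    (Fintype.card ι : ℚ) ≤ χ ⬝ᵥ χ := by
  rw [Fintype.card_eq_sum_ones, Nat.cast_sum, Nat.cast_one]
  refine Finset.sum_le_sum fun i _ => ?_
  rw [← abs_mul_abs_self]
  nlinarith [one_le_abs_of_oddVecs hχ i]

lemma dotProduct_self_of_signVecs {ε : ι → ℚ} (hε : ε ∈ signVecs ι) :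
    ε ⬝ᵥ ε = Fintype.card ι := by
  rw [Fintype.card_eq_sum_ones, Nat.cast_sum, Nat.cast_one]
  exact Finset.sum_congr rfl fun i _ => by rcases hε i with h | h <;> rw [h] <;> norm_num

lemma dotProduct_self_add_of_orthogonal {a b : ι → ℚ} (hab : a ⬝ᵥ b = 0) :
    (a + b) ⬝ᵥ (a + b) = a ⬝ᵥ a + b ⬝ᵥ b := by
  rw [add_dotProduct, dotProduct_add, dotProduct_add, dotProduct_comm b a, hab]; ring

lemma dotProduct_self_sub_two_smul (a b : ι → ℚ) :
    (a - (2 : ℚ) • b) ⬝ᵥ (a - (2 : ℚ) • b) = a ⬝ᵥ a - 4 * (a ⬝ᵥ b) + 4 * (b ⬝ᵥ b) := by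
  simp only [sub_dotProduct, dotProduct_sub, smul_dotProduct, dotProduct_smul, smul_eq_mul,
    dotProduct_comm b a]
  ring

lemma dotProduct_self_lt_of_zero_one {y a : ι → ℚ} (hy : ∀ j, y j = 0 ∨ y j = 1)
    (ha : ∀ j, 1 ≤ a j) {e : ι} (hye : y e = 1) (hae : 1 < a e) : y ⬝ᵥ y < a ⬝ᵥ y := by
  refine Finset.sum_lt_sum (fun j _ => ?_) ⟨e, Finset.mem_univ e, by rw [hye]; linarith⟩
  rcases hy j with h | h <;> rw [h]
  · simp
  · linarith [ha j]

structure IsOrthCompl (K K' : Submodule ℚ (ι → ℚ)) : Prop where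
  orthogonal : ∀ x ∈ K, ∀ y ∈ K', x ⬝ᵥ y = 0
  finrank_add : Module.finrank ℚ K + Module.finrank ℚ K' = Fintype.card ι

lemma isOrthCompl_range_transpose_ker {m : Type} [Fintype m] (D : Matrix m ι ℚ) :
    IsOrthCompl (LinearMap.range D.transpose.mulVecLin) (LinearMap.ker D.mulVecLin) where
  orthogonal := by
    rintro _ ⟨g, rfl⟩ y hy
    rw [LinearMap.mem_ker, Matrix.mulVecLin_apply] at hy
    rw [Matrix.mulVecLin_apply, Matrix.mulVec_transpose, ← Matrix.dotProduct_mulVec, hy,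
      dotProduct_zero]
  finrank_add := by
    have h := LinearMap.finrank_range_add_finrank_ker D.mulVecLin
    rw [Module.finrank_pi, ← Matrix.rank] at h
    rwa [← Matrix.rank, Matrix.rank_transpose]

namespace IsOrthCompl

variable {K K' : Submodule ℚ (ι → ℚ)}

lemma symm (h : IsOrthCompl K K') : IsOrthCompl K' K :=
  ⟨fun x hx y hy => dotProduct_comm x y ▸ h.orthogonal y hy x hx, by rw [add_comm, h.finrank_add]⟩

lemma eq_zero_of_mem_of_mem (h : IsOrthCompl K K') {x : ι → ℚ} (hx : x ∈ K) (hx' : x ∈ K') :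
    x = 0 :=
  dotProduct_self_eq_zero.1 (h.orthogonal x hx x hx')

lemma sup_eq_top (h : IsOrthCompl K K') : K ⊔ K' = ⊤ := by
  have hinf : K ⊓ K' = ⊥ :=
    eq_bot_iff.2 fun x hx => (Submodule.mem_bot ℚ).2 (h.eq_zero_of_mem_of_mem hx.1 hx.2)
  have := Submodule.finrank_sup_add_finrank_inf_eq K K'
  rw [hinf, finrank_bot, add_zero, h.finrank_add, ← Module.finrank_pi ℚ] at this
  exact Submodule.eq_top_of_finrank_eq this

lemma mem_of_orthogonal (h : IsOrthCompl K K') {w : ι → ℚ} (hw : ∀ s ∈ K, w ⬝ᵥ s = 0) :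
    w ∈ K' := by
  obtain ⟨c, hc, f, hf, rfl⟩ := Submodule.mem_sup.1 (h.sup_eq_top ▸ Submodule.mem_top (x := w))
  have hcc : c ⬝ᵥ c = 0 := by
    have := hw c hc
    rwa [add_dotProduct, dotProduct_comm f c, h.orthogonal c hc f hf, add_zero] at this
  rwa [dotProduct_self_eq_zero.1 hcc, zero_add]

lemma dotProduct_eq_of_sub_mem (h : IsOrthCompl K K') {a b s : ι → ℚ} (hab : a - b ∈ K')
    (hs : s ∈ K) : a ⬝ᵥ s = b ⬝ᵥ s := by
  have := h.orthogonal s hs _ hab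
  rwa [dotProduct_sub, dotProduct_comm s a, dotProduct_comm s b, sub_eq_zero] at this

end IsOrthCompl

end Vectors

section Lattices

variable {ι : Type} [Fintype ι] [DecidableEq ι] {K K' : Submodule ℚ (ι → ℚ)}

lemma qform_one (x y : ι → ℚ) : qform (1 : Matrix ι ι ℤ) x y = x ⬝ᵥ y := by
  rw [qform, Matrix.map_one _ Int.cast_zero Int.cast_one, Matrix.one_mulVec]

lemma isInt_dotProduct {x y : ι → ℚ} (hx : x ∈ intVecs ι) (hy : y ∈ intVecs ι) :
    isInt (x ⬝ᵥ y) := by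
  unfold dotProduct
  induction (Finset.univ : Finset ι) using Finset.cons_induction with
  | empty => exact ⟨0, by simp⟩
  | cons i s _ ih => rw [Finset.sum_cons]; exact isInt_add (isInt_mul (hx i) (hy i)) ih

lemma oddVecs_subset_intVecs : oddVecs ι ⊆ intVecs ι := fun χ hχ i => by
  obtain ⟨m, hm⟩ := hχ i; exact ⟨2 * m + 1, by rw [hm]; push_cast; ring⟩

lemma add_two_smul_mem_oddVecs {χ y : ι → ℚ} (hχ : χ ∈ oddVecs ι) (hy : y ∈ intVecs ι) :
    χ + (2 : ℚ) • y ∈ oddVecs ι := fun i => by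
  obtain ⟨m, hm⟩ := hχ i; obtain ⟨k, hk⟩ := hy i
  exact ⟨m + k, by simp only [Pi.add_apply, Pi.smul_apply, smul_eq_mul, hm, hk]; push_cast; ring⟩

lemma exists_sub_eq_two_smul_of_oddVecs {χ χ' : ι → ℚ} (hχ : χ ∈ oddVecs ι)
    (hχ' : χ' ∈ oddVecs ι) : ∃ t ∈ intVecs ι, χ' - χ = (2 : ℚ) • t := by
  choose m hm using hχ
  choose m' hm' using hχ'
  exact ⟨fun i => m' i - m i, fun i => ⟨m' i - m i, by push_cast; rfl⟩, funext fun i => by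
    simp only [Pi.sub_apply, Pi.smul_apply, smul_eq_mul, hm, hm']; ring⟩

lemma even_dotProduct_sub_dotProduct_self {χ y : ι → ℚ} (hχ : χ ∈ oddVecs ι)
    (hy : y ∈ intVecs ι) : ∃ m : ℤ, χ ⬝ᵥ y - y ⬝ᵥ y = 2 * m := by
  have hterm : ∀ i, ∃ m : ℤ, χ i * y i - y i * y i = 2 * m := fun i => by
    obtain ⟨a, ha⟩ := hχ i
    obtain ⟨k, hk⟩ := hy i
    obtain ⟨t, ht⟩ := Int.even_mul_succ_self (k - 1)
    have htQ : ((k : ℚ) - 1) * (k - 1 + 1) = t + t := by exact_mod_cast ht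
    exact ⟨a * k - t, by rw [ha, hk]; push_cast; linarith⟩
  choose m hm using hterm
  exact ⟨∑ i, m i, by
    simp only [dotProduct, ← Finset.sum_sub_distrib, hm, Int.cast_sum, Finset.mul_sum]⟩

lemma exists_min_dotProduct_self {A : Set (ι → ℚ)} (hA : A ⊆ intVecs ι) (hne : A.Nonempty) :
    ∃ χ ∈ A, ∀ χ' ∈ A, χ ⬝ᵥ χ ≤ χ' ⬝ᵥ χ' := by
  classical
  have hnat : ∀ χ ∈ A, ∃ k : ℕ, χ ⬝ᵥ χ = k := fun χ hχ => by
    obtain ⟨m, hm⟩ := isInt_dotProduct (hA hχ) (hA hχ)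
    have : (0 : ℚ) ≤ m := hm ▸ Finset.sum_nonneg fun i _ => mul_self_nonneg (χ i)
    exact ⟨m.toNat, by rw [hm, ← Int.cast_natCast, Int.toNat_of_nonneg (by exact_mod_cast this)]⟩
  have hex : ∃ k : ℕ, ∃ χ ∈ A, χ ⬝ᵥ χ = k := by
    obtain ⟨χ, hχ⟩ := hne
    obtain ⟨k, hk⟩ := hnat χ hχ
    exact ⟨k, χ, hχ, hk⟩
  obtain ⟨χ, hχ, hk⟩ := Nat.find_spec hex
  refine ⟨χ, hχ, fun χ' hχ' => ?_⟩
  obtain ⟨k', hk'⟩ := hnat χ' hχ'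
  rw [hk, hk']
  exact_mod_cast Nat.find_min' hex ⟨χ', hχ', hk'⟩

lemma exists_nat_smul_mem_intVecs (x : ι → ℚ) : ∃ N : ℕ, 0 < N ∧ (N : ℚ) • x ∈ intVecs ι := by
  refine ⟨∏ i, (x i).den, Finset.prod_pos fun i _ => (x i).pos, fun i => ?_⟩
  obtain ⟨k, hk⟩ := Finset.dvd_prod_of_mem (fun i => (x i).den) (Finset.mem_univ i)
  refine ⟨k * (x i).num, ?_⟩
  rw [Pi.smul_apply, smul_eq_mul, hk, Nat.cast_mul, mul_comm ((x i).den : ℚ), mul_assoc,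
    mul_comm ((x i).den : ℚ), Rat.mul_den_eq_num]
  push_cast; ring

def intLat (K : Submodule ℚ (ι → ℚ)) : Set (ι → ℚ) := intVecs ι ∩ K

lemma zero_mem_intLat : (0 : ι → ℚ) ∈ intLat K := ⟨fun _ => ⟨0, by simp⟩, K.zero_mem⟩

lemma add_mem_intLat {x y : ι → ℚ} (hx : x ∈ intLat K) (hy : y ∈ intLat K) :
    x + y ∈ intLat K :=
  ⟨fun i => isInt_add (hx.1 i) (hy.1 i), K.add_mem hx.2 hy.2⟩

lemma neg_mem_intLat {x : ι → ℚ} (hx : x ∈ intLat K) : -x ∈ intLat K :=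
  ⟨fun i => isInt_neg (hx.1 i), K.neg_mem hx.2⟩

lemma intLat_top : intLat (⊤ : Submodule ℚ (ι → ℚ)) = intVecs ι :=
  Set.inter_univ _

lemma span_intLat : Submodule.span ℚ (intLat K) = K := by
  refine le_antisymm (Submodule.span_le.2 fun x hx => hx.2) fun x hx => ?_
  obtain ⟨N, hN, hNx⟩ := exists_nat_smul_mem_intVecs x
  have hN' : (N : ℚ) ≠ 0 := by positivity
  rw [← inv_smul_smul₀ hN' x]
  exact Submodule.smul_mem _ _ (Submodule.subset_span ⟨hNx, K.smul_mem _ hx⟩)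

lemma rkOf_intLat : rkOf (intLat K) = Module.finrank ℚ K := by
  rw [rkOf, span_intLat]

lemma dotProduct_eq_zero_of_intLat {w : ι → ℚ} (hw : ∀ s ∈ intLat K, w ⬝ᵥ s = 0) {s : ι → ℚ}
    (hs : s ∈ K) : w ⬝ᵥ s = 0 := by
  rw [← span_intLat (K := K)] at hs
  induction hs using Submodule.span_induction with
  | mem y hy => exact hw y hy
  | zero => exact dotProduct_zero w
  | add y z _ _ hy hz => rw [dotProduct_add, hy, hz, add_zero]
  | smul a y _ hy => rw [dotProduct_smul, hy, smul_zero]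

lemma mem_dualOf_intLat {x : ι → ℚ} :
    x ∈ dualOf 1 (intLat K) ↔ x ∈ K ∧ ∀ s ∈ intLat K, isInt (x ⬝ᵥ s) := by
  simp only [dualOf, AddSubgroup.mem_mk, span_intLat, qform_one]
  rfl

/-- The integrality of `ξ ⬝ᵥ s` required by `CharOf` follows from the parity condition. -/
lemma mem_CharOf_intLat {ξ : ι → ℚ} :
    ξ ∈ CharOf 1 (intLat K) ↔ ξ ∈ K ∧ ∀ s ∈ intLat K, ∃ m : ℤ, ξ ⬝ᵥ s - s ⬝ᵥ s = 2 * m := by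
  simp only [CharOf, Set.mem_ofPred_eq, mem_dualOf_intLat, qform_one]
  refine ⟨fun h => ⟨h.1.1, h.2⟩, fun h => ⟨⟨h.1, fun s hs => ?_⟩, h.2⟩⟩
  obtain ⟨m, hm⟩ := h.2 s hs
  obtain ⟨k, hk⟩ := isInt_dotProduct hs.1 hs.1
  exact ⟨2 * m + k, by push_cast; linarith⟩

lemma mem_CharOf_intVecs {χ : ι → ℚ} : χ ∈ CharOf 1 (intVecs ι) ↔ χ ∈ oddVecs ι := by
  rw [← intLat_top, mem_CharOf_intLat]
  refine ⟨fun h i => ?_, fun h => ⟨trivial, fun s hs => even_dotProduct_sub_dotProduct_self h hs.1⟩⟩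
  obtain ⟨m, hm⟩ := h.2 (Pi.single i 1) ⟨fun j => by
    rw [Pi.single_apply]; exact isInt_ite_one_zero _, trivial⟩
  simp only [dotProduct_single, Pi.single_eq_same, mul_one] at hm
  exact ⟨m, by linarith⟩

lemma sub_two_smul_mem_CharOf {ξ c : ι → ℚ} (hξ : ξ ∈ CharOf 1 (intLat K))
    (hc : c ∈ intLat K) : ξ - (2 : ℚ) • c ∈ CharOf 1 (intLat K) := by
  obtain ⟨hξK, hpar⟩ := mem_CharOf_intLat.1 hξ
  refine mem_CharOf_intLat.2 ⟨K.sub_mem hξK (K.smul_mem _ hc.2), fun s hs => ?_⟩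
  obtain ⟨m, hm⟩ := hpar s hs
  obtain ⟨k, hk⟩ := isInt_dotProduct hc.1 hs.1
  refine ⟨m - k, ?_⟩
  rw [sub_dotProduct, smul_dotProduct, hk, smul_eq_mul]
  push_cast
  linarith

lemma sameClass_refl (ξ : ι → ℚ) : SameClass (intLat K) ξ ξ :=
  ⟨0, zero_mem_intLat, by simp⟩

lemma SameClass.symm {ξ ξ' : ι → ℚ} (h : SameClass (intLat K) ξ ξ') :
    SameClass (intLat K) ξ' ξ := by
  obtain ⟨y, hy, rfl⟩ := h
  exact ⟨-y, neg_mem_intLat hy, by rw [smul_neg]; abel⟩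

lemma SameClass.trans {ξ ξ' ξ'' : ι → ℚ} (h : SameClass (intLat K) ξ ξ')
    (h' : SameClass (intLat K) ξ' ξ'') : SameClass (intLat K) ξ ξ'' := by
  obtain ⟨y, hy, rfl⟩ := h
  obtain ⟨y', hy', rfl⟩ := h'
  exact ⟨y + y', add_mem_intLat hy hy', by rw [smul_add]; abel⟩

lemma sameClass_sub_two_smul (ξ : ι → ℚ) {c : ι → ℚ} (hc : c ∈ intLat K) :
    SameClass (intLat K) ξ (ξ - (2 : ℚ) • c) :=
  ⟨-c, neg_mem_intLat hc, by rw [smul_neg, sub_eq_add_neg]⟩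

lemma sameClass_sub_of_sameClass {ξ ξ' χ χ' : ι → ℚ} (hχ : χ ∈ oddVecs ι)
    (hχ' : χ' ∈ oddVecs ι) (hl : χ - ξ ∈ K') (hl' : χ' - ξ' ∈ K')
    (h : SameClass (intLat K) ξ ξ') : SameClass (intLat K') (χ - ξ) (χ' - ξ') := by
  obtain ⟨c, hc, rfl⟩ := h
  obtain ⟨t, ht, hχχ'⟩ := exists_sub_eq_two_smul_of_oddVecs hχ hχ'
  have hdiff : χ' - (ξ + (2 : ℚ) • c) - (χ - ξ) = (2 : ℚ) • (t - c) := by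
    rw [smul_sub, ← hχχ']; abel
  have htc : t - c ∈ K' := by
    have := K'.smul_mem (1 / 2 : ℚ) (K'.sub_mem hl' hl)
    rwa [hdiff, smul_smul, one_div, inv_mul_cancel₀ two_ne_zero, one_smul] at this
  exact ⟨t - c, ⟨fun i => isInt_sub (ht i) (hc.1 i), htc⟩, by rw [← hdiff]; abel⟩

lemma sameClass_iff_sameClass_sub {ξ ξ' χ χ' : ι → ℚ} (hξ : ξ ∈ K) (hξ' : ξ' ∈ K)
    (hχ : χ ∈ oddVecs ι) (hχ' : χ' ∈ oddVecs ι) (hl : χ - ξ ∈ K') (hl' : χ' - ξ' ∈ K') :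
    SameClass (intLat K) ξ ξ' ↔ SameClass (intLat K') (χ - ξ) (χ' - ξ') := by
  refine ⟨sameClass_sub_of_sameClass hχ hχ' hl hl', fun h => ?_⟩
  have := sameClass_sub_of_sameClass hχ hχ' (by rwa [sub_sub_cancel]) (by rwa [sub_sub_cancel]) h
  rwa [sub_sub_cancel, sub_sub_cancel] at this

lemma dmk_eq_of_sub_mem_intVecs {a b : ι → ℚ} (ha : a ∈ dualOf 1 (intLat K))
    (hb : b ∈ dualOf 1 (intLat K)) (hab : a - b ∈ intVecs ι) :
    dmk 1 (intLat K) ha = dmk 1 (intLat K) hb := by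
  refine QuotientAddGroup.eq.2 (AddSubgroup.subset_closure ?_)
  have hba : -a + b = -(a - b) := by abel
  exact ⟨fun i => by
    simp only [AddSubgroup.coe_add, NegMemClass.coe_neg, hba]; exact isInt_neg (hab i),
    K.add_mem (K.neg_mem (mem_dualOf_intLat.1 ha).1) (mem_dualOf_intLat.1 hb).1⟩

lemma IsOrthCompl.sub_mem_of_forall_qform_eq (h : IsOrthCompl K K') {a b : ι → ℚ}
    (hab : ∀ y ∈ intLat K, qform 1 a y = qform 1 b y) : a - b ∈ K' :=
  h.mem_of_orthogonal fun _ hs => dotProduct_eq_zero_of_intLat (fun y hy => by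
    rw [sub_dotProduct, ← qform_one, ← qform_one, hab y hy, sub_self]) hs

end Lattices

section Splitting

variable {ι : Type} [Fintype ι] [DecidableEq ι] {K K' : Submodule ℚ (ι → ℚ)}

/-- With `K'` the orthogonal complement of `K`, this says that `K ∩ ℤ^ι` is primitive in `ℤ^ι`. -/
def HasIntLifts (K K' : Submodule ℚ (ι → ℚ)) : Prop :=
  ∀ x : ι → ℚ, (∀ s ∈ intLat K, isInt (x ⬝ᵥ s)) → ∃ z ∈ intVecs ι, z - x ∈ K'

/-- Modelled on the fundamental cuts of a spanning forest `F`, and on the fundamental cycles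
of its complement. -/
def HasFundamentalSystem (K : Submodule ℚ (ι → ℚ)) (F : Finset ι) : Prop :=
  ∀ e ∈ F, ∃ b ∈ intLat K, ∀ j ∈ F, b j = if j = e then 1 else 0

namespace IsOrthCompl

lemma eq_zero_of_eqOn_zero (h : IsOrthCompl K K') {F : Finset ι}
    (hF : HasFundamentalSystem K' Fᶜ) {w : ι → ℚ} (hw : w ∈ K) (hwF : ∀ j ∈ F, w j = 0) :
    w = 0 := by
  funext j
  by_cases hj : j ∈ F
  · exact hwF j hj
  obtain ⟨b, hb, hbδ⟩ := hF j (Finset.mem_compl.2 hj)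
  show w j = 0
  rw [← h.orthogonal w hw b hb.2, dotProduct, Finset.sum_eq_single j]
  · rw [hbδ j (Finset.mem_compl.2 hj), if_pos rfl, mul_one]
  · intro i _ hij
    by_cases hi : i ∈ F
    · rw [hwF i hi, zero_mul]
    · rw [hbδ i (Finset.mem_compl.2 hi), if_neg hij, mul_zero]
  · exact fun h => absurd (Finset.mem_univ j) h

lemma hasIntLifts (h : IsOrthCompl K K') {F : Finset ι} (hK : HasFundamentalSystem K F)
    (hK' : HasFundamentalSystem K' Fᶜ) : HasIntLifts K K' := by
  choose! b hb hbδ using hK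
  intro x hx
  refine ⟨fun j => if j ∈ F then x ⬝ᵥ b j else 0, fun j => ?_,
    h.mem_of_orthogonal fun s hs => ?_⟩
  · dsimp only
    split_ifs with hj
    exacts [hx _ (hb j hj), ⟨0, by simp⟩]
  have hs_eq : s = ∑ e ∈ F, s e • b e := by
    refine sub_eq_zero.1 (h.eq_zero_of_eqOn_zero hK' (K.sub_mem hs
      (K.sum_mem fun e he => K.smul_mem _ (hb e he).2)) fun j hj => ?_)
    rw [Pi.sub_apply, Finset.sum_apply, Finset.sum_eq_single_of_mem j hj, Pi.smul_apply,
      hbδ j hj j hj, if_pos rfl, smul_eq_mul, mul_one, sub_self]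
    intro e he hej
    rw [Pi.smul_apply, hbδ e he j hj, if_neg (Ne.symm hej), smul_zero]
  rw [sub_dotProduct, sub_eq_zero]
  conv_rhs => rw [hs_eq, dotProduct_sum]
  change ∑ i, (if i ∈ F then x ⬝ᵥ b i else 0) * s i = _
  simp only [ite_mul, zero_mul, Finset.sum_ite_mem, Finset.univ_inter, dotProduct_smul,
    smul_eq_mul]
  exact Finset.sum_congr rfl fun e _ => mul_comm _ _

end IsOrthCompl

structure IsSplitting (K K' : Submodule ℚ (ι → ℚ)) : Prop extends IsOrthCompl K K' where
  hasIntLifts : HasIntLifts K K'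
  hasIntLifts' : HasIntLifts K' K

lemma IsOrthCompl.isSplitting (h : IsOrthCompl K K') {F : Finset ι}
    (hK : HasFundamentalSystem K F) (hK' : HasFundamentalSystem K' Fᶜ) : IsSplitting K K' :=
  ⟨h, h.hasIntLifts hK hK', h.symm.hasIntLifts hK' (by rwa [compl_compl])⟩

noncomputable def oddLift (K' : Submodule ℚ (ι → ℚ)) (ξ : ι → ℚ) : ι → ℚ :=
  Classical.epsilon fun χ => χ ∈ oddVecs ι ∧ χ - ξ ∈ K'

/-- The map `φ` of the theorem, on representatives. -/
noncomputable def charMap (K' : Submodule ℚ (ι → ℚ)) (ξ : ι → ℚ) : ι → ℚ := oddLift K' ξ - ξ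

noncomputable def intLift (K' : Submodule ℚ (ι → ℚ)) (x : ι → ℚ) : ι → ℚ :=
  Classical.epsilon fun z => z ∈ intVecs ι ∧ z - x ∈ K'

namespace IsSplitting

lemma symm (h : IsSplitting K K') : IsSplitting K' K :=
  ⟨h.toIsOrthCompl.symm, h.hasIntLifts', h.hasIntLifts⟩

lemma exists_oddVecs_sub_mem (h : IsSplitting K K') {ξ : ι → ℚ}
    (hξ : ξ ∈ CharOf 1 (intLat K)) : ∃ χ ∈ oddVecs ι, χ - ξ ∈ K' := by
  obtain ⟨-, hpar⟩ := mem_CharOf_intLat.1 hξ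
  obtain ⟨z, hz, hzξ⟩ := h.hasIntLifts ξ (mem_dualOf_intLat.1 hξ.1).2
  -- `z - 1` pairs evenly with `K ∩ ℤ^ι`, so half of it lifts too; correct `z` by twice that lift
  set x : ι → ℚ := (1 / 2 : ℚ) • (z - 1)
  have hx : ∀ s ∈ intLat K, isInt (x ⬝ᵥ s) := fun s hs => by
    obtain ⟨m, hm⟩ := hpar s hs
    obtain ⟨m', hm'⟩ := even_dotProduct_sub_dotProduct_self (χ := 1)
      (fun _ => ⟨0, by norm_num⟩) hs.1
    refine ⟨m - m', ?_⟩
    simp only [x, smul_dotProduct, sub_dotProduct, smul_eq_mul,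
      h.dotProduct_eq_of_sub_mem hzξ hs.2]
    push_cast
    linarith
  obtain ⟨z', hz', hz'x⟩ := h.hasIntLifts x hx
  refine ⟨1 + (2 : ℚ) • z', add_two_smul_mem_oddVecs (fun _ => ⟨0, by norm_num⟩) hz', ?_⟩
  have : 1 + (2 : ℚ) • z' - ξ = (z - ξ) + (2 : ℚ) • (z' - x) := by
    simp only [x, smul_sub, smul_smul]; norm_num; abel
  rw [this]
  exact K'.add_mem hzξ (K'.smul_mem _ hz'x)

lemma sub_mem_CharOf (h : IsSplitting K K') {χ ξ : ι → ℚ} (hχ : χ ∈ oddVecs ι) (hξ : ξ ∈ K)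
    (hl : χ - ξ ∈ K') : χ - ξ ∈ CharOf 1 (intLat K') := by
  refine mem_CharOf_intLat.2 ⟨hl, fun s hs => ?_⟩
  rw [sub_dotProduct, h.orthogonal ξ hξ s hs.2, sub_zero]
  exact even_dotProduct_sub_dotProduct_self hχ hs.1

lemma oddLift_spec (h : IsSplitting K K') {ξ : ι → ℚ} (hξ : ξ ∈ CharOf 1 (intLat K)) :
    oddLift K' ξ ∈ oddVecs ι ∧ oddLift K' ξ - ξ ∈ K' :=
  Classical.epsilon_spec (p := fun χ => χ ∈ oddVecs ι ∧ χ - ξ ∈ K')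
    (by simpa only [exists_prop] using h.exists_oddVecs_sub_mem hξ)

lemma intLift_spec (h : IsSplitting K K') {x : ι → ℚ} (hx : ∀ s ∈ intLat K, isInt (x ⬝ᵥ s)) :
    intLift K' x ∈ intVecs ι ∧ intLift K' x - x ∈ K' :=
  Classical.epsilon_spec (p := fun z => z ∈ intVecs ι ∧ z - x ∈ K')
    (by simpa only [exists_prop] using h.hasIntLifts x hx)

lemma intLift_sub_mem_dualOf (h : IsSplitting K K') {x : ι → ℚ}
    (hx : x ∈ dualOf 1 (intLat K)) : intLift K' x - x ∈ dualOf 1 (intLat K') := by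
  obtain ⟨hxK, hxint⟩ := mem_dualOf_intLat.1 hx
  obtain ⟨hz, hzx⟩ := h.intLift_spec hxint
  refine mem_dualOf_intLat.2 ⟨hzx, fun s hs => ?_⟩
  rw [sub_dotProduct, h.orthogonal x hxK s hs.2, sub_zero]
  exact isInt_dotProduct hz hs.1

noncomputable def glueDual (h : IsSplitting K K') : dualOf 1 (intLat K) →+ disc 1 (intLat K') :=
  AddMonoidHom.mk' (fun x => dmk _ _ (h.intLift_sub_mem_dualOf x.2)) fun a b => by
    obtain ⟨ha, -⟩ := h.intLift_spec (mem_dualOf_intLat.1 a.2).2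
    obtain ⟨hb, -⟩ := h.intLift_spec (mem_dualOf_intLat.1 b.2).2
    obtain ⟨hab, -⟩ := h.intLift_spec (mem_dualOf_intLat.1 (a + b).2).2
    refine dmk_eq_of_sub_mem_intVecs _ (add_mem (h.intLift_sub_mem_dualOf a.2)
      (h.intLift_sub_mem_dualOf b.2)) fun i => ?_
    have : (intLift K' ↑(a + b) - ↑(a + b) - ((intLift K' ↑a - ↑a) + (intLift K' ↑b - ↑b))) i =
        intLift K' ↑(a + b) i - intLift K' ↑a i - intLift K' ↑b i := by
      simp only [Pi.sub_apply, Pi.add_apply, AddSubgroup.coe_add]; ring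
    rw [this]
    exact isInt_sub (isInt_sub (hab i) (ha i)) (hb i)

noncomputable def glueHom (h : IsSplitting K K') : disc 1 (intLat K) →+ disc 1 (intLat K') :=
  QuotientAddGroup.lift _ h.glueDual fun x hx => by
    refine (AddSubgroup.closure_le _).2 (fun y hy => ?_) hx
    obtain ⟨hz, -⟩ := h.intLift_spec (mem_dualOf_intLat.1 y.2).2
    show dmk _ _ _ = dmk _ _ (zero_mem _)
    exact dmk_eq_of_sub_mem_intVecs _ _ fun i => by
      rw [sub_zero, Pi.sub_apply]; exact isInt_sub (hz i) (hy.1 i)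

lemma glueHom_dmk (h : IsSplitting K K') {x : ι → ℚ} (hx : x ∈ dualOf 1 (intLat K)) :
    h.glueHom (dmk _ _ hx) = dmk _ _ (h.intLift_sub_mem_dualOf hx) :=
  rfl

lemma glueHom_symm_glueHom (h : IsSplitting K K') (q : disc 1 (intLat K)) :
    h.symm.glueHom (h.glueHom q) = q := by
  refine QuotientAddGroup.induction_on q fun x => ?_
  change h.symm.glueHom (h.glueHom (dmk _ _ x.2)) = dmk _ _ x.2
  rw [h.glueHom_dmk, h.symm.glueHom_dmk]
  obtain ⟨hz, -⟩ := h.intLift_spec (mem_dualOf_intLat.1 x.2).2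
  obtain ⟨hz', -⟩ := h.symm.intLift_spec (mem_dualOf_intLat.1 (h.intLift_sub_mem_dualOf x.2)).2
  refine dmk_eq_of_sub_mem_intVecs _ _ fun i => ?_
  rw [sub_sub, sub_add_cancel, Pi.sub_apply]
  exact isInt_sub (hz' i) (hz i)

noncomputable def glueEquiv (h : IsSplitting K K') : disc 1 (intLat K) ≃+ disc 1 (intLat K') :=
  { h.glueHom with
    invFun := h.symm.glueHom
    left_inv := h.glueHom_symm_glueHom
    right_inv := h.symm.glueHom_symm_glueHom }

lemma torsorMapIso (h : IsSplitting K K') :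
    TorsorMapIso 1 (intLat K) 1 (intLat K') (charMap K') h.glueEquiv := by
  refine ⟨fun ξ hξ => ?_, fun ξ hξ ξ' hξ' => ?_, fun μ hμ => ?_, ?_⟩
  · obtain ⟨hχ, hl⟩ := h.oddLift_spec hξ
    exact h.sub_mem_CharOf hχ (mem_CharOf_intLat.1 hξ).1 hl
  · obtain ⟨hχ, hl⟩ := h.oddLift_spec hξ
    obtain ⟨hχ', hl'⟩ := h.oddLift_spec hξ'
    exact sameClass_iff_sameClass_sub (mem_CharOf_intLat.1 hξ).1 (mem_CharOf_intLat.1 hξ').1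
      hχ hχ' hl hl'
  · obtain ⟨χ, hχ, hl⟩ := h.symm.exists_oddVecs_sub_mem hμ
    have hξ := h.symm.sub_mem_CharOf hχ (mem_CharOf_intLat.1 hμ).1 hl
    obtain ⟨hχ₁, hl₁⟩ := h.oddLift_spec hξ
    refine ⟨χ - μ, hξ, ?_⟩
    have := (sameClass_iff_sameClass_sub hl hl hχ₁ hχ hl₁
      (by rw [sub_sub_cancel]; exact (mem_CharOf_intLat.1 hμ).1)).1 (sameClass_refl _)
    rwa [sub_sub_cancel] at this
  · intro ξ hξ ξ' hξ' x y hx hy hxξ hyξ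
    obtain ⟨hχ, -⟩ := h.oddLift_spec hξ
    obtain ⟨hχ', -⟩ := h.oddLift_spec hξ'
    obtain ⟨t, ht, hχχ'⟩ := exists_sub_eq_two_smul_of_oddVecs hχ hχ'
    obtain ⟨hz, -⟩ := h.intLift_spec (mem_dualOf_intLat.1 hx).2
    have hxy : x + y = t := by
      refine smul_right_injective _ (two_ne_zero (α := ℚ)) ?_
      simp only [smul_add]
      rw [← hχχ', ← sub_eq_of_eq_add' hxξ, ← sub_eq_of_eq_add' hyξ, charMap, charMap]
      abel
    change h.glueHom (dmk _ _ hx) = _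
    rw [h.glueHom_dmk]
    refine dmk_eq_of_sub_mem_intVecs _ _ fun i => ?_
    rw [sub_sub, hxy, Pi.sub_apply]
    exact isInt_sub (hz i) (ht i)

end IsSplitting

/-- `|χ - 2v|² < |χ|²` is exactly `v ⬝ᵥ v < χ ⬝ᵥ v`. -/
def CanShortenOdd (K K' : Submodule ℚ (ι → ℚ)) : Prop :=
  ∀ χ ∈ oddVecs ι, (∃ e, 1 < |χ e|) →
    (∃ c ∈ intLat K, c ⬝ᵥ c < χ ⬝ᵥ c) ∨ ∃ f ∈ intLat K', f ⬝ᵥ f < χ ⬝ᵥ f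

lemma CanShortenOdd.symm (h : CanShortenOdd K K') : CanShortenOdd K' K :=
  fun χ hχ he => (h χ hχ he).symm

namespace IsSplitting
lemma exists_signVecs_sub_mem (h : IsSplitting K K') (hK : CanShortenOdd K K') {ξ : ι → ℚ}
    (hξ : ξ ∈ ShortOf 1 (intLat K)) : ∃ ε ∈ signVecs ι, ε - ξ ∈ K' := by
  obtain ⟨hchar, hshort⟩ := hξ
  obtain ⟨χ, ⟨hχ, hl⟩, hmin⟩ := exists_min_dotProduct_self
    (A := {χ | χ ∈ oddVecs ι ∧ χ - ξ ∈ K'}) (fun χ hχ => oddVecs_subset_intVecs hχ.1)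
    (h.exists_oddVecs_sub_mem hchar)
  refine ⟨χ, fun i => ?_, hl⟩
  by_contra hne
  have hbig : 1 < |χ i| := (one_le_abs_of_oddVecs hχ i).lt_of_ne fun h1 =>
    hne ((abs_eq zero_le_one).1 h1.symm)
  rcases hK χ hχ ⟨i, hbig⟩ with ⟨c, hc, hlt⟩ | ⟨f, hf, hlt⟩
  · have hξc : ξ ⬝ᵥ c = χ ⬝ᵥ c := (h.dotProduct_eq_of_sub_mem hl hc.2).symm
    have := hshort _ (sub_two_smul_mem_CharOf hchar hc) (sameClass_sub_two_smul ξ hc)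
    rw [qform_one, qform_one, dotProduct_self_sub_two_smul, hξc] at this
    linarith
  · have hodd : χ - (2 : ℚ) • f ∈ oddVecs ι := by
      rw [sub_eq_add_neg, ← smul_neg]; exact add_two_smul_mem_oddVecs hχ (neg_mem_intLat hf).1
    have hlt' := hmin _ ⟨hodd, by rw [sub_right_comm]; exact K'.sub_mem hl (K'.smul_mem _ hf.2)⟩
    rw [dotProduct_self_sub_two_smul] at hlt'
    linarith

lemma exists_shortOf_intVecs_restrict (h : IsSplitting K K') (hK : CanShortenOdd K K')
    {ξ : ι → ℚ} (hξ : ξ ∈ ShortOf 1 (intLat K)) :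
    ∃ χ ∈ ShortOf 1 (intVecs ι), ∀ y ∈ intLat K, qform 1 χ y = qform 1 ξ y := by
  obtain ⟨ε, hε, hl⟩ := exists_signVecs_sub_mem h hK hξ
  refine ⟨ε, ⟨mem_CharOf_intVecs.2 (signVecs_subset_oddVecs hε), fun χ' hχ' _ => ?_⟩,
    fun y hy => ?_⟩
  · rw [qform_one, qform_one, dotProduct_self_of_signVecs hε]
    exact card_le_dotProduct_self_of_oddVecs (mem_CharOf_intVecs.1 hχ')
  · rw [qform_one, qform_one, h.dotProduct_eq_of_sub_mem hl hy.2]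

lemma dCompat (h : IsSplitting K K') (hK : CanShortenOdd K K') :
    DCompat 1 (intLat K) 1 (intLat K') (-1) (charMap K') := by
  rintro ξ hξ _ ⟨⟨ξ₁, hξ₁, hsame, rfl⟩, hlb⟩
  have hξ₁short : ξ₁ ∈ ShortOf 1 (intLat K) := ⟨hξ₁, fun χ' hχ' h' => by
    have := hlb ⟨χ', hχ', hsame.trans h', rfl⟩
    linarith⟩
  obtain ⟨ε, hε, hl⟩ := exists_signVecs_sub_mem h hK hξ₁short
  have hξ₁K := (mem_CharOf_intLat.1 hξ₁).1
  have hrk : (rkOf (intLat K) : ℚ) + rkOf (intLat K') = Fintype.card ι := by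
    rw [rkOf_intLat, rkOf_intLat]; exact_mod_cast h.finrank_add
  have hnorm := dotProduct_self_of_signVecs hε
  rw [← add_sub_cancel ξ₁ ε, dotProduct_self_add_of_orthogonal (h.orthogonal _ hξ₁K _ hl)]
    at hnorm
  obtain ⟨hχ, hlχ⟩ := oddLift_spec h hξ
  have hsame' : SameClass (intLat K') (charMap K' ξ) (ε - ξ₁) :=
    (sameClass_iff_sameClass_sub (mem_CharOf_intLat.1 hξ).1 hξ₁K hχ
      (signVecs_subset_oddVecs hε) hlχ hl).1 hsame
  refine ⟨⟨ε - ξ₁, h.sub_mem_CharOf (signVecs_subset_oddVecs hε) hξ₁K hl, hsame', ?_⟩, ?_⟩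
  · rw [qform_one, qform_one]
    linarith
  · rintro _ ⟨μ, hμ, hμsame, rfl⟩
    obtain ⟨f, hf, rfl⟩ := hsame'.symm.trans hμsame
    have hodd : ξ₁ + (ε - ξ₁ + (2 : ℚ) • f) ∈ oddVecs ι := by
      rw [← add_assoc, add_sub_cancel]
      exact add_two_smul_mem_oddVecs (signVecs_subset_oddVecs hε) hf.1
    have := card_le_dotProduct_self_of_oddVecs hodd
    rw [dotProduct_self_add_of_orthogonal
      (h.orthogonal _ hξ₁K _ (mem_CharOf_intLat.1 hμ).1)] at this
    rw [qform_one, qform_one]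
    linarith

lemma sameClass_charMap_of_restrict (h : IsSplitting K K') :
    ∀ χ ∈ CharOf 1 (intVecs ι), ∀ ξ₁ ∈ CharOf 1 (intLat K), ∀ ξ₂ ∈ CharOf 1 (intLat K'),
      (∀ y ∈ intLat K, qform 1 χ y = qform 1 ξ₁ y) →
      (∀ y ∈ intLat K', qform 1 χ y = qform 1 ξ₂ y) → SameClass (intLat K') (charMap K' ξ₁) ξ₂ := by
  intro χ hχ ξ₁ hξ₁ ξ₂ hξ₂ h₁ h₂
  have hl₁ : χ - ξ₁ ∈ K' := h.sub_mem_of_forall_qform_eq h₁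
  have hξ₂ : ξ₂ = χ - ξ₁ := by
    have hK : χ - ξ₂ - ξ₁ ∈ K :=
      K.sub_mem (h.symm.sub_mem_of_forall_qform_eq h₂) (mem_CharOf_intLat.1 hξ₁).1
    have hK' : χ - ξ₂ - ξ₁ ∈ K' := by
      rw [sub_right_comm]; exact K'.sub_mem hl₁ (mem_CharOf_intLat.1 hξ₂).1
    rw [eq_comm, ← sub_eq_zero, ← h.eq_zero_of_mem_of_mem hK hK']
    abel
  obtain ⟨hχ₁, hl⟩ := oddLift_spec h hξ₁
  rw [hξ₂]
  exact (sameClass_iff_sameClass_sub (mem_CharOf_intLat.1 hξ₁).1 (mem_CharOf_intLat.1 hξ₁).1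
    hχ₁ (mem_CharOf_intVecs.1 hχ) hl hl₁).1 (sameClass_refl _)

end IsSplitting

end Splitting

section ReachWithin

variable {α : Type*}

def ReachWithin (r : α → α → Prop) : ℕ → α → α → Prop
  | 0, u, v => u = v
  | k + 1, u, v => u = v ∨ ∃ w, r u w ∧ ReachWithin r k w v

lemma reachWithin_self (r : α → α → Prop) : ∀ (k : ℕ) (u : α), ReachWithin r k u u
  | 0, _ => rfl
  | _ + 1, _ => Or.inl rfl

lemma ReachWithin.succ {r : α → α → Prop} :
    ∀ {k : ℕ} {u v : α}, ReachWithin r k u v → ReachWithin r (k + 1) u v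
  | 0, _, _, h => Or.inl h
  | _ + 1, _, _, Or.inl h => Or.inl h
  | _ + 1, _, _, Or.inr ⟨w, hr, hw⟩ => Or.inr ⟨w, hr, hw.succ⟩

lemma exists_reachWithin_of_reflTransGen {r : α → α → Prop} {u v : α}
    (h : Relation.ReflTransGen r u v) : ∃ k, ReachWithin r k u v := by
  induction h using Relation.ReflTransGen.head_induction_on with
  | refl => exact ⟨0, rfl⟩
  | head hr _ ih =>
    obtain ⟨k, hk⟩ := ih
    exact ⟨k + 1, Or.inr ⟨_, hr, hk⟩⟩

end ReachWithin

namespace MultiGraph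

variable (G : MultiGraph)

def Dmat : Matrix (Fin G.nV) (Fin G.nE) ℚ :=
  fun v e => (if G.hd e = v then 1 else 0) - (if G.tl e = v then 1 else 0)

lemma bndry_eq_mulVec (x : Fin G.nE → ℚ) : G.bndry x = G.Dmat *ᵥ x :=
  funext fun _ => Finset.sum_congr rfl fun _ _ => mul_comm _ _

lemma Dmat_mulVec_single (j : Fin G.nE) :
    G.Dmat *ᵥ Pi.single j 1 = Pi.single (G.hd j) 1 - Pi.single (G.tl j) 1 := by
  funext v
  simp [Dmat, Pi.single_apply, eq_comm]

def Kf : Submodule ℚ (Fin G.nE → ℚ) := LinearMap.ker G.Dmat.mulVecLin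

def Kc : Submodule ℚ (Fin G.nE → ℚ) := LinearMap.range G.Dmat.transpose.mulVecLin

lemma mem_Kf {x : Fin G.nE → ℚ} : x ∈ G.Kf ↔ G.Dmat *ᵥ x = 0 := LinearMap.mem_ker

lemma mem_Kc {x : Fin G.nE → ℚ} :
    x ∈ G.Kc ↔ ∃ g : Fin G.nV → ℚ, ∀ e, x e = g (G.hd e) - g (G.tl e) := by
  have hD : ∀ g : Fin G.nV → ℚ, ∀ e, (G.Dmat.transpose *ᵥ g) e = g (G.hd e) - g (G.tl e) := by
    intro g e
    simp [Matrix.mulVec, dotProduct, Dmat, sub_mul, Finset.sum_sub_distrib]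
  refine ⟨?_, fun ⟨g, hg⟩ => ⟨g, funext fun e => (hD g e).trans (hg e).symm⟩⟩
  rintro ⟨g, rfl⟩
  exact ⟨g, hD g⟩

lemma flowSet_eq : G.flowSet = intLat G.Kf := by
  ext x
  rw [flowSet, intLat, Set.mem_inter_iff, SetLike.mem_coe, mem_Kf, ← bndry_eq_mulVec]
  rfl

lemma cutSet_eq : G.cutSet = intLat G.Kc := by
  ext x
  rw [cutSet, intLat, Set.mem_inter_iff, SetLike.mem_coe, mem_Kc]
  rfl

lemma isOrthCompl : IsOrthCompl G.Kc G.Kf := isOrthCompl_range_transpose_ker G.Dmat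

lemma reachIn_symm {A : Set (Fin G.nE)} {u v : Fin G.nV} (h : G.ReachIn A u v) :
    G.ReachIn A v u := by
  induction h with
  | refl => exact .refl
  | tail _ hstep ih =>
    obtain ⟨e, he, hor⟩ := hstep
    exact Relation.ReflTransGen.head ⟨e, he, hor.symm⟩ ih

def Spans (F : Finset (Fin G.nE)) : Prop := ∀ u v, G.ReachIn Set.univ u v → G.ReachIn F u v

lemma reachIn_erase {F : Finset (Fin G.nE)} {e : Fin G.nE}
    (he : G.ReachIn (F.erase e) (G.hd e) (G.tl e)) {u v : Fin G.nV} (h : G.ReachIn F u v) :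
    G.ReachIn (F.erase e) u v := by
  induction h with
  | refl => exact .refl
  | tail _ hstep ih =>
    obtain ⟨j, hj, hor⟩ := hstep
    by_cases hje : j = e
    · subst hje
      obtain ⟨rfl, rfl⟩ | ⟨rfl, rfl⟩ := hor
      exacts [ih.trans he, ih.trans (G.reachIn_symm he)]
    · exact ih.tail ⟨j, Finset.mem_erase.2 ⟨hje, hj⟩, hor⟩

lemma exists_spanning_forest : ∃ F : Finset (Fin G.nE),
    G.Spans F ∧ ∀ e ∈ F, ¬ G.ReachIn (F.erase e) (G.hd e) (G.tl e) := by
  classical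
  obtain ⟨F, hF, hmin⟩ := Finset.exists_min_image (Finset.univ.filter G.Spans) Finset.card
    ⟨Finset.univ, by simp [Spans]⟩
  rw [Finset.mem_filter] at hF
  refine ⟨F, hF.2, fun e he hreach => ?_⟩
  have := hmin (F.erase e) (Finset.mem_filter.2
    ⟨Finset.mem_univ _, fun u v h => G.reachIn_erase hreach (hF.2 u v h)⟩)
  exact (Finset.card_erase_lt_of_mem he).not_ge this

lemma cutVec_mem_intLat (F : Finset (Fin G.nE)) (e : Fin G.nE) : G.cutVec F e ∈ intLat G.Kc := by
  classical
  refine ⟨fun j => isInt_sub (isInt_ite_one_zero _) (isInt_ite_one_zero _), G.mem_Kc.2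
    ⟨fun v => -(if G.ReachIn (F.erase e) v (G.tl e) then 1 else 0), fun j => ?_⟩⟩
  simp only [cutVec]
  ring

lemma hasFundamentalSystem_Kc {F : Finset (Fin G.nE)}
    (hF : ∀ e ∈ F, ¬ G.ReachIn (F.erase e) (G.hd e) (G.tl e)) : HasFundamentalSystem G.Kc F := by
  classical
  refine fun e he => ⟨G.cutVec F e, G.cutVec_mem_intLat F e, fun j hj => ?_⟩
  simp only [cutVec]
  by_cases hje : j = e
  · subst hje
    rw [if_pos .refl, if_neg (hF j he), if_pos rfl, sub_zero]
  · have hstep : G.ReachIn (F.erase e) (G.hd j) (G.tl j) :=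
      .single ⟨j, Finset.mem_erase.2 ⟨hje, hj⟩, Or.inl ⟨rfl, rfl⟩⟩
    have hiff : G.ReachIn (F.erase e) (G.tl j) (G.tl e) ↔ G.ReachIn (F.erase e) (G.hd j) (G.tl e) :=
      ⟨hstep.trans, (G.reachIn_symm hstep).trans⟩
    simp only [hiff, sub_self, if_neg hje]

lemma exists_walk_vector {A : Set (Fin G.nE)} {u v : Fin G.nV} (h : G.ReachIn A u v) :
    ∃ p ∈ intVecs (Fin G.nE), (∀ j ∉ A, p j = 0) ∧
      G.Dmat *ᵥ p = Pi.single v 1 - Pi.single u 1 := by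
  induction h with
  | refl => exact ⟨0, fun _ => ⟨0, by simp⟩, fun _ _ => rfl, by simp⟩
  | tail _ hstep ih =>
    obtain ⟨p, hp, hpA, hD⟩ := ih
    obtain ⟨j, hj, hor⟩ := hstep
    have hsingle : Pi.single j (1 : ℚ) ∈ intVecs (Fin G.nE) := fun i => by
      rw [Pi.single_apply]; exact isInt_ite_one_zero _
    have hsupp : ∀ i ∉ A, (Pi.single j 1 : Fin G.nE → ℚ) i = 0 := fun i hi => by
      rw [Pi.single_apply, if_neg fun h => hi (by rwa [h])]
    rcases hor with ⟨h1, h2⟩ | ⟨h1, h2⟩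
    · refine ⟨p - Pi.single j 1, fun i => isInt_sub (hp i) (hsingle i), fun i hi => ?_, ?_⟩
      · rw [Pi.sub_apply, hpA i hi, hsupp i hi, sub_zero]
      · rw [Matrix.mulVec_sub, hD, Dmat_mulVec_single, h1, h2]; abel
    · refine ⟨p + Pi.single j 1, fun i => isInt_add (hp i) (hsingle i), fun i hi => ?_, ?_⟩
      · rw [Pi.add_apply, hpA i hi, hsupp i hi, add_zero]
      · rw [Matrix.mulVec_add, hD, Dmat_mulVec_single, h1, h2]; abel

lemma hasFundamentalSystem_Kf {F : Finset (Fin G.nE)} (hF : G.Spans F) :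
    HasFundamentalSystem G.Kf Fᶜ := by
  intro e he
  obtain ⟨p, hp, hpF, hD⟩ :=
    G.exists_walk_vector (hF _ _ (.single ⟨e, trivial, Or.inl ⟨rfl, rfl⟩⟩))
  refine ⟨Pi.single e 1 + p, ⟨fun i => isInt_add ?_ (hp i), G.mem_Kf.2 ?_⟩, fun j hj => ?_⟩
  · rw [Pi.single_apply]; exact isInt_ite_one_zero _
  · rw [Matrix.mulVec_add, Dmat_mulVec_single, hD]; abel
  · rw [Pi.add_apply, hpF j (by simpa using hj), add_zero, Pi.single_apply]

lemma isSplitting : IsSplitting G.Kc G.Kf := by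
  obtain ⟨F, hspan, hforest⟩ := G.exists_spanning_forest
  exact G.isOrthCompl.isSplitting (G.hasFundamentalSystem_Kc hforest)
    (G.hasFundamentalSystem_Kf hspan)

def Arc (u v : Fin G.nV) : Prop := ∃ e, G.tl e = u ∧ G.hd e = v

/-- The invariant `ReachWithin G.Arc k (G.tl j) v` on the arcs used makes the path simple. -/
lemma exists_path_vector_of_reachWithin (v : Fin G.nV) :
    ∀ (k : ℕ) (u : Fin G.nV), ReachWithin G.Arc k u v →
      ∃ p : Fin G.nE → ℚ, (∀ j, p j = 0 ∨ p j = 1) ∧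
        G.Dmat *ᵥ p = Pi.single v 1 - Pi.single u 1 ∧
        ∀ j, p j ≠ 0 → G.tl j ≠ v ∧ ReachWithin G.Arc k (G.tl j) v := by
  intro k
  induction k with
  | zero =>
    rintro u rfl
    exact ⟨0, fun _ => Or.inl rfl, by simp, fun _ h => absurd rfl h⟩
  | succ k ih =>
    intro u hu
    by_cases hk : ReachWithin G.Arc k u v
    · obtain ⟨p, h01, hD, hp⟩ := ih u hk
      exact ⟨p, h01, hD, fun j hj => ⟨(hp j hj).1, (hp j hj).2.succ⟩⟩
    obtain rfl | ⟨w, ⟨j₀, rfl, rfl⟩, hw⟩ := id hu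
    · exact absurd (reachWithin_self _ _ _) hk
    obtain ⟨p, h01, hD, hp⟩ := ih _ hw
    have hpj₀ : p j₀ = 0 := by_contra fun h => hk (hp j₀ h).2
    refine ⟨p + Pi.single j₀ 1, fun j => ?_, ?_, fun j hj => ?_⟩
    · by_cases hj : j = j₀
      · subst hj; simp [hpj₀]
      · simpa [Pi.single_apply, hj] using h01 j
    · rw [Matrix.mulVec_add, hD, Dmat_mulVec_single]; abel
    · by_cases hj' : j = j₀
      · subst hj'
        exact ⟨fun h => hk (by rw [h]; exact reachWithin_self _ _ _), hu⟩
      · have : p j ≠ 0 := by simpa [Pi.single_apply, hj'] using hj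
        exact ⟨(hp j this).1, (hp j this).2.succ⟩

lemma exists_path_vector {u v : Fin G.nV} (h : Relation.ReflTransGen G.Arc u v) :
    ∃ p : Fin G.nE → ℚ, (∀ j, p j = 0 ∨ p j = 1) ∧
      G.Dmat *ᵥ p = Pi.single v 1 - Pi.single u 1 ∧ ∀ j, p j ≠ 0 → G.tl j ≠ v := by
  obtain ⟨k, hk⟩ := exists_reachWithin_of_reflTransGen h
  obtain ⟨p, h01, hD, hp⟩ := G.exists_path_vector_of_reachWithin v k u hk
  exact ⟨p, h01, hD, fun j hj => (hp j hj).1⟩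

/-- Minty's lemma: every arc lies on a directed cycle or in a directed cut. -/
lemma exists_directed_cycle_or_cut (e₀ : Fin G.nE) :
    ∃ y : Fin G.nE → ℚ, (∀ j, y j = 0 ∨ y j = 1) ∧ y e₀ = 1 ∧ (y ∈ G.Kf ∨ y ∈ G.Kc) := by
  classical
  by_cases hr : Relation.ReflTransGen G.Arc (G.hd e₀) (G.tl e₀)
  · obtain ⟨p, h01, hD, hp⟩ := G.exists_path_vector hr
    have hpe₀ : p e₀ = 0 := by_contra fun h => hp e₀ h rfl
    refine ⟨p + Pi.single e₀ 1, fun j => ?_, by simp [hpe₀], Or.inl (G.mem_Kf.2 ?_)⟩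
    · by_cases hj : j = e₀
      · subst hj; simp [hpe₀]
      · simpa [Pi.single_apply, hj] using h01 j
    · rw [Matrix.mulVec_add, hD, Dmat_mulVec_single]; abel
  · set U := {w | Relation.ReflTransGen G.Arc (G.hd e₀) w}
    refine ⟨fun j => (if G.hd j ∈ U then 1 else 0) - (if G.tl j ∈ U then 1 else 0), fun j => ?_,
      ?_, Or.inr (G.mem_Kc.2 ⟨fun w => if w ∈ U then 1 else 0, fun j => rfl⟩)⟩
    · have hclosed : G.tl j ∈ U → G.hd j ∈ U := fun h => h.tail ⟨j, rfl, rfl⟩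
      by_cases h1 : G.hd j ∈ U <;> by_cases h2 : G.tl j ∈ U <;> simp_all
    · have : G.hd e₀ ∈ U := .refl
      simp [this, show G.tl e₀ ∉ U from hr]

lemma Dmat_reorient_mulVec (o : Fin G.nE → Bool) (y : Fin G.nE → ℚ) :
    (G.reorient o).Dmat *ᵥ y = G.Dmat *ᵥ (signOf o * y) := by
  funext (v : Fin G.nV)
  simp only [Matrix.mulVec, dotProduct]
  refine Finset.sum_congr rfl fun (j : Fin G.nE) _ => ?_
  change _ = _ * (signOf o j * y j)
  simp only [Dmat, reorient, signOf]
  split_ifs <;> simp_all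

lemma mem_Kf_of_reorient {o : Fin G.nE → Bool} {y : Fin G.nE → ℚ} (hy : y ∈ (G.reorient o).Kf) :
    signOf o * y ∈ G.Kf :=
  G.mem_Kf.2 (by rw [← Dmat_reorient_mulVec]; exact (mem_Kf _).1 hy)

lemma mem_Kc_of_reorient {o : Fin G.nE → Bool} {y : Fin G.nE → ℚ} (hy : y ∈ (G.reorient o).Kc) :
    signOf o * y ∈ G.Kc := by
  obtain ⟨g, hg⟩ := (mem_Kc _).1 hy
  refine G.mem_Kc.2 ⟨g, fun e => ?_⟩
  rw [Pi.mul_apply, hg e]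
  simp only [signOf, reorient]
  cases o e <;> simp

lemma canShortenOdd : CanShortenOdd G.Kc G.Kf := by
  rintro χ hχ ⟨e₀, he₀⟩
  set o : Fin G.nE → Bool := fun j => decide (0 < χ j)
  obtain ⟨y, h01, hye₀, hy⟩ : ∃ y : Fin G.nE → ℚ, (∀ j, y j = 0 ∨ y j = 1) ∧ y e₀ = 1 ∧
      (y ∈ (G.reorient o).Kf ∨ y ∈ (G.reorient o).Kc) :=
    (G.reorient o).exists_directed_cycle_or_cut e₀
  -- orienting each edge along the sign of `χ` turns `χ` into `|χ|`
  have hsign : ∀ j, signOf o j * signOf o j = 1 ∧ χ j * signOf o j = |χ j| := fun j => by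
    by_cases h : 0 < χ j
    · simp [signOf, o, h, abs_of_pos h]
    · simp [signOf, o, h, abs_of_nonpos (not_lt.1 h)]
  have hint : signOf o * y ∈ intVecs (Fin G.nE) := fun j => by
    refine isInt_mul ?_ ?_
    · unfold signOf; split_ifs; exacts [⟨1, by norm_num⟩, ⟨-1, by norm_num⟩]
    · rcases h01 j with h | h <;> rw [h]; exacts [⟨0, by norm_num⟩, ⟨1, by norm_num⟩]
  have hlt : (signOf o * y) ⬝ᵥ (signOf o * y) < χ ⬝ᵥ (signOf o * y) := by
    have key := dotProduct_self_lt_of_zero_one (a := fun j => |χ j|) h01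
      (one_le_abs_of_oddVecs hχ) hye₀ he₀
    convert key using 1 <;> refine Finset.sum_congr rfl fun j _ => ?_
    · rw [Pi.mul_apply, mul_mul_mul_comm, (hsign j).1, one_mul]
    · rw [Pi.mul_apply, ← mul_assoc, (hsign j).2]
  rcases hy with hy | hy
  · exact Or.inr ⟨_, ⟨hint, G.mem_Kf_of_reorient hy⟩, hlt⟩
  · exact Or.inl ⟨_, ⟨hint, G.mem_Kc_of_reorient hy⟩, hlt⟩

end MultiGraph

/-- the restrictions `Short(C₁(G;ℤ)) → Short(𝒞(G)), Short(ℱ(G))`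
surject, and restriction induces an isomorphism `(C(𝒞(G)), d) → (C(ℱ(G)), −d)`
characterized by `φ([r_𝒞 χ]) = [r_ℱ χ]` for `χ ∈ Char(C₁(G;ℤ))`. -/
theorem stmt_19 (G : MultiGraph) :
    (∀ ξ ∈ ShortOf (1 : Matrix (Fin G.nE) (Fin G.nE) ℤ) G.cutSet,
      ∃ χ ∈ ShortOf (1 : Matrix (Fin G.nE) (Fin G.nE) ℤ) (intVecs (Fin G.nE)),
        ∀ y ∈ G.cutSet, qform (1 : Matrix (Fin G.nE) (Fin G.nE) ℤ) χ y
          = qform (1 : Matrix (Fin G.nE) (Fin G.nE) ℤ) ξ y) ∧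
    (∀ ξ ∈ ShortOf (1 : Matrix (Fin G.nE) (Fin G.nE) ℤ) G.flowSet,
      ∃ χ ∈ ShortOf (1 : Matrix (Fin G.nE) (Fin G.nE) ℤ) (intVecs (Fin G.nE)),
        ∀ y ∈ G.flowSet, qform (1 : Matrix (Fin G.nE) (Fin G.nE) ℤ) χ y
          = qform (1 : Matrix (Fin G.nE) (Fin G.nE) ℤ) ξ y) ∧
    ∃ (Φ : (Fin G.nE → ℚ) → (Fin G.nE → ℚ))
      (ψ : disc (1 : Matrix (Fin G.nE) (Fin G.nE) ℤ) G.cutSet ≃+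
           disc (1 : Matrix (Fin G.nE) (Fin G.nE) ℤ) G.flowSet),
      TorsorMapIso (1 : Matrix (Fin G.nE) (Fin G.nE) ℤ) G.cutSet
        (1 : Matrix (Fin G.nE) (Fin G.nE) ℤ) G.flowSet Φ ψ ∧
      DCompat (1 : Matrix (Fin G.nE) (Fin G.nE) ℤ) G.cutSet
        (1 : Matrix (Fin G.nE) (Fin G.nE) ℤ) G.flowSet (-1) Φ ∧
      (∀ χ ∈ CharOf (1 : Matrix (Fin G.nE) (Fin G.nE) ℤ) (intVecs (Fin G.nE)),
        ∀ ξ₁ ∈ CharOf (1 : Matrix (Fin G.nE) (Fin G.nE) ℤ) G.cutSet,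
        ∀ ξ₂ ∈ CharOf (1 : Matrix (Fin G.nE) (Fin G.nE) ℤ) G.flowSet,
        (∀ y ∈ G.cutSet, qform (1 : Matrix (Fin G.nE) (Fin G.nE) ℤ) χ y
          = qform (1 : Matrix (Fin G.nE) (Fin G.nE) ℤ) ξ₁ y) →
        (∀ y ∈ G.flowSet, qform (1 : Matrix (Fin G.nE) (Fin G.nE) ℤ) χ y
          = qform (1 : Matrix (Fin G.nE) (Fin G.nE) ℤ) ξ₂ y) →
        SameClass G.flowSet (Φ ξ₁) ξ₂) := by
  rw [G.cutSet_eq, G.flowSet_eq]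
  have hS := G.isSplitting
  have hK := G.canShortenOdd
  exact ⟨fun ξ hξ => hS.exists_shortOf_intVecs_restrict hK hξ,
    fun ξ hξ => hS.symm.exists_shortOf_intVecs_restrict hK.symm hξ,
    charMap G.Kf, hS.glueEquiv, hS.torsorMapIso, hS.dCompat hK, hS.sameClass_charMap_of_restrict⟩

end Greene
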